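/- arXiv:1608.00600 — 4 statements merged into one kernel-verified Lean document; each statement's English description precedes it below -/
import Mathlib

section
/- For every integer n ≥ 3 and every real d > 0, the iterated integral ∫_{x=-∞}^{0} ∫_{y=d}^{∞} log( y(x−d) / (x(y−d)) ) / (y−x)^n dy dx equals 2·H(n−2) / ((n−1)(n−2)·d^{n−2}). -/
/-!
With `g t = log (t / (t - d))`, the logarithm of the cross ratio splits as `g y + g (d - x)`
for `x < 0 < d < y`. Integrating `(y - x)⁻ⁿ` out in the other variable (Fubini for the
first term, the reflection `t = d - x` for the second), both pieces equal `J / (n - 1)` where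
`J = ∫_{t > d} g t / t^(n-1)`. Under `u = d / t`,
`J = d^(2-n) ∫₀¹ -u^(n-3) log (1 - u) du`, and `-(n - 2) u^(n-3) log (1 - u)` has the explicit
primitive `logPrimitive (n - 2)`, which vanishes at `0` and equals `H (n - 2)` at `1`.
-/

open Real MeasureTheory

/-- The `m`-th harmonic number `H(m) = ∑_{i=1}^{m} 1/i`, with `H(0) = 0`. -/
noncomputable def H (m : ℕ) : ℝ := ∑ i ∈ Finset.range m, (1 : ℝ) / (i + 1)

open Set Filter Topology

section ChangeOfVariables

variable {E : Type*} [NormedAddCommGroup E] (f : ℝ → E)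

theorem integral_Iio_comp_sub_left [NormedSpace ℝ E] (a b : ℝ) :
    ∫ x in Iio a, f (b - x) = ∫ t in Ioi (b - a), f t := by
  have h := (Measure.measurePreserving_sub_left volume b).setIntegral_preimage_emb
    (MeasurableEquiv.subLeft b).measurableEmbedding f (Ioi (b - a))
  simpa using h

theorem integrableOn_Iio_comp_sub_left_iff (a b : ℝ) :
    IntegrableOn (fun x ↦ f (b - x)) (Iio a) ↔ IntegrableOn f (Ioi (b - a)) := by
  have h := (Measure.measurePreserving_sub_left volume b).integrableOn_comp_preimage
    (MeasurableEquiv.subLeft b).measurableEmbedding (f := f) (s := Ioi (b - a))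
  simpa [Function.comp_def] using h

theorem integral_Ioi_comp_sub_right [NormedSpace ℝ E] (a c : ℝ) :
    ∫ y in Ioi a, f (y - c) = ∫ t in Ioi (a - c), f t := by
  have h := (measurePreserving_sub_right volume c).setIntegral_preimage_emb
    (MeasurableEquiv.subRight c).measurableEmbedding f (Ioi (a - c))
  simpa using h

theorem integrableOn_Ioi_comp_sub_right_iff (a c : ℝ) :
    IntegrableOn (fun y ↦ f (y - c)) (Ioi a) ↔ IntegrableOn f (Ioi (a - c)) := by
  have h := (measurePreserving_sub_right volume c).integrableOn_comp_preimage
    (MeasurableEquiv.subRight c).measurableEmbedding (f := f) (s := Ioi (a - c))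
  simpa [Function.comp_def] using h

end ChangeOfVariables

theorem integral_Ioi_inv_pow (k : ℕ) {c : ℝ} (hc : 0 < c) :
    IntegrableOn (fun t : ℝ ↦ (t ^ (k + 2))⁻¹) (Ioi c) ∧
      ∫ t in Ioi c, (t ^ (k + 2))⁻¹ = (c ^ (k + 1))⁻¹ / (k + 1) := by
  have hderiv : ∀ t ∈ Ici c,
      HasDerivAt (fun t : ℝ ↦ -(t ^ (k + 1))⁻¹ / (k + 1)) (t ^ (k + 2))⁻¹ t := by
    intro t (ht : c ≤ t)
    have ht0 : t ≠ 0 := (hc.trans_le ht).ne'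
    refine (((hasDerivAt_pow (k + 1) t).inv (pow_ne_zero _ ht0)).neg.div_const _).congr_deriv ?_
    rw [Nat.add_sub_cancel]
    push_cast
    field_simp
    ring
  have hpos : ∀ t ∈ Ioi c, 0 ≤ (t ^ (k + 2))⁻¹ := fun t (ht : c < t) ↦
    inv_nonneg.mpr (pow_nonneg (hc.trans ht).le _)
  have htop : Tendsto (fun t : ℝ ↦ -(t ^ (k + 1))⁻¹ / (k + 1)) atTop (𝓝 0) := by
    simpa using ((tendsto_pow_atTop k.succ_ne_zero).inv_tendsto_atTop.neg.div_const
      ((k : ℝ) + 1))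
  refine ⟨integrableOn_Ioi_deriv_of_nonneg' hderiv hpos htop, ?_⟩
  rw [integral_Ioi_of_hasDerivAt_of_nonneg' hderiv hpos htop]
  ring

theorem integral_Ioi_inv_sub_pow (k : ℕ) {x c : ℝ} (hxc : x < c) :
    IntegrableOn (fun y : ℝ ↦ ((y - x) ^ (k + 2))⁻¹) (Ioi c) ∧
      ∫ y in Ioi c, ((y - x) ^ (k + 2))⁻¹ = ((c - x) ^ (k + 1))⁻¹ / (k + 1) := by
  obtain ⟨hint, hval⟩ := integral_Ioi_inv_pow k (sub_pos.mpr hxc)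
  exact ⟨(integrableOn_Ioi_comp_sub_right_iff (fun t ↦ (t ^ (k + 2))⁻¹) c x).mpr hint,
    (integral_Ioi_comp_sub_right (fun t ↦ (t ^ (k + 2))⁻¹) c x).trans hval⟩

theorem integral_Iio_inv_sub_pow (k : ℕ) {a y : ℝ} (hay : a < y) :
    IntegrableOn (fun x : ℝ ↦ ((y - x) ^ (k + 2))⁻¹) (Iio a) ∧
      ∫ x in Iio a, ((y - x) ^ (k + 2))⁻¹ = ((y - a) ^ (k + 1))⁻¹ / (k + 1) := by
  obtain ⟨hint, hval⟩ := integral_Ioi_inv_pow k (sub_pos.mpr hay)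
  exact ⟨(integrableOn_Iio_comp_sub_left_iff (fun t ↦ (t ^ (k + 2))⁻¹) a y).mpr hint,
    (integral_Iio_comp_sub_left (fun t ↦ (t ^ (k + 2))⁻¹) a y).trans hval⟩

theorem integral_Iio_div_sub_pow (k : ℕ) (c : ℝ) {y : ℝ} (hy : 0 < y) :
    ∫ x in Iio 0, c / (y - x) ^ (k + 2) = c / y ^ (k + 1) / (k + 1) := by
  simp only [div_eq_mul_inv, integral_const_mul, (integral_Iio_inv_sub_pow k hy).2, sub_zero]
  ring

theorem integral_Ioi_div_sub_pow (k : ℕ) (c : ℝ) {x d : ℝ} (hxd : x < d) :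
    ∫ y in Ioi d, c / (y - x) ^ (k + 2) = c / (d - x) ^ (k + 1) / (k + 1) := by
  simp only [div_eq_mul_inv, integral_const_mul, (integral_Ioi_inv_sub_pow k hxd).2]
  ring

/-- Since `log 0 = 0`, `logPrimitive m 1 = H m`; it is continuous at `1` because
`(1 - u ^ m) * log (1 - u) = (∑ i < m, u ^ i) * ((1 - u) * log (1 - u))`. -/
noncomputable def logPrimitive (m : ℕ) (u : ℝ) : ℝ :=
  (1 - u ^ m) * log (1 - u) + ∑ j ∈ Finset.range m, u ^ (j + 1) / (j + 1)

theorem logPrimitive_apply_zero (m : ℕ) : logPrimitive m 0 = 0 := by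
  simp [logPrimitive]

theorem logPrimitive_apply_one (m : ℕ) : logPrimitive m 1 = H m := by
  simp [logPrimitive, H]

@[fun_prop]
theorem continuous_logPrimitive (m : ℕ) : Continuous (logPrimitive m) := by
  have h : logPrimitive m = fun u ↦ (∑ i ∈ Finset.range m, u ^ i) * ((1 - u) * log (1 - u)) +
      ∑ j ∈ Finset.range m, u ^ (j + 1) / (j + 1) := by
    funext u
    rw [logPrimitive, ← geom_sum_mul_neg]
    ring
  rw [h]
  fun_prop

theorem hasDerivAt_logPrimitive (m : ℕ) {u : ℝ} (hu : u ≠ 1) :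
    HasDerivAt (logPrimitive m) (-(m * u ^ (m - 1) * log (1 - u))) u := by
  have hu' : 1 - u ≠ 0 := sub_ne_zero.mpr hu.symm
  have hsum : HasDerivAt (fun u : ℝ ↦ ∑ j ∈ Finset.range m, u ^ (j + 1) / (j + 1))
      (∑ j ∈ Finset.range m, u ^ j) u := by
    refine (HasDerivAt.fun_sum fun (j : ℕ) _ ↦
      (hasDerivAt_pow (j + 1) u).div_const ((j : ℝ) + 1)).congr_deriv ?_
    refine Finset.sum_congr rfl fun j _ ↦ ?_
    push_cast
    field_simp
  refine ((((hasDerivAt_pow m u).const_sub 1).mul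
    (((hasDerivAt_id u).const_sub 1).log hu')).add hsum).congr_deriv ?_
  rw [id, ← geom_sum_mul_neg]
  field_simp
  ring

theorem hasDerivAt_logPrimitive_div (m : ℕ) {d t : ℝ} (ht : t ≠ 0) (hdt : t ≠ d) :
    HasDerivAt (fun s ↦ logPrimitive m (d / s))
      (-(m * d ^ m) * (log (t / (t - d)) / t ^ (m + 1))) t := by
  have hne : d / t ≠ 1 := fun h ↦ hdt ((div_eq_one_iff_eq ht).mp h).symm
  have hlog : log (1 - d / t) = -log (t / (t - d)) := by
    rw [← log_inv, inv_div, one_sub_div ht]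
  refine ((hasDerivAt_logPrimitive m hne).comp t
    ((hasDerivAt_const t d).div (hasDerivAt_id t) ht)).congr_deriv ?_
  rw [hlog]
  rcases m with _ | m
  · simp
  · rw [Nat.add_sub_cancel, div_pow]
    field_simp
    ring

theorem integral_Ioi_log_div_sub_div_pow {m : ℕ} (hm : m ≠ 0) {d : ℝ} (hd : 0 < d) :
    IntegrableOn (fun t ↦ log (t / (t - d)) / t ^ (m + 1)) (Ioi d) ∧
      ∫ t in Ioi d, log (t / (t - d)) / t ^ (m + 1) = H m / (m * d ^ m) := by
  have hc : (m : ℝ) * d ^ m ≠ 0 := by positivity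
  set Φ : ℝ → ℝ := fun t ↦ -logPrimitive m (d / t) / (m * d ^ m)
  have hcont : ContinuousWithinAt Φ (Ici d) d :=
    (by fun_prop (disch := exact hd.ne') : ContinuousAt Φ d).continuousWithinAt
  have hderiv : ∀ t ∈ Ioi d, HasDerivAt Φ (log (t / (t - d)) / t ^ (m + 1)) t := by
    intro t ht
    refine ((hasDerivAt_logPrimitive_div m (hd.trans ht).ne' ht.ne').neg.div_const
      _).congr_deriv ?_
    field_simp
  have hpos : ∀ t ∈ Ioi d, 0 ≤ log (t / (t - d)) / t ^ (m + 1) := fun t (ht : d < t) ↦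
    div_nonneg (log_nonneg ((one_le_div (sub_pos.mpr ht)).mpr (sub_le_self t hd.le)))
      (pow_nonneg (hd.trans ht).le _)
  have htop : Tendsto Φ atTop (𝓝 0) := by
    have h := ((continuous_logPrimitive m).tendsto 0).comp
      ((tendsto_const_nhds (x := d)).div_atTop tendsto_id)
    simpa [Φ, Function.comp_def, logPrimitive_apply_zero] using h.neg.div_const ((m : ℝ) * d ^ m)
  refine ⟨integrableOn_Ioi_deriv_of_nonneg hcont hderiv hpos htop, ?_⟩
  rw [integral_Ioi_of_hasDerivAt_of_nonneg hcont hderiv hpos htop]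
  simp [Φ, div_self hd.ne', logPrimitive_apply_one, neg_div]

section Fubini

variable {φ : ℝ → ℝ} {d : ℝ} (k : ℕ)

theorem integrable_prod_div_sub_pow (hφ : Measurable φ) (hd : 0 ≤ d)
    (hint : IntegrableOn (fun y ↦ φ y / y ^ (k + 1)) (Ioi d)) :
    Integrable (fun p : ℝ × ℝ ↦ φ p.2 / (p.2 - p.1) ^ (k + 2))
      ((volume.restrict (Iio 0)).prod (volume.restrict (Ioi d))) := by
  have hmeas : Measurable fun p : ℝ × ℝ ↦ φ p.2 / (p.2 - p.1) ^ (k + 2) := by fun_prop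
  rw [integrable_prod_iff' hmeas.aestronglyMeasurable]
  constructor
  · filter_upwards [ae_restrict_mem measurableSet_Ioi] with y (hy : d < y)
    simpa only [div_eq_mul_inv] using
      (integral_Iio_inv_sub_pow k (hd.trans_lt hy)).1.const_mul (φ y)
  · refine (hint.norm.div_const ((k : ℝ) + 1)).congr ?_
    filter_upwards [ae_restrict_mem measurableSet_Ioi] with y (hy : d < y)
    have hy0 : 0 < y := hd.trans_lt hy
    have habs : ∀ x ∈ Iio (0 : ℝ),
        ‖φ y / (y - x) ^ (k + 2)‖ = |φ y| / (y - x) ^ (k + 2) := fun x (hx : x < 0) ↦ by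
      rw [norm_div, norm_eq_abs, norm_eq_abs,
        abs_of_pos (pow_pos (sub_pos.mpr (hx.trans hy0)) _)]
    rw [setIntegral_congr_fun measurableSet_Iio habs, integral_Iio_div_sub_pow k _ hy0,
      norm_div, norm_eq_abs, norm_eq_abs, abs_of_pos (pow_pos hy0 _)]

theorem integral_Iio_integral_Ioi_div_sub_pow (hφ : Measurable φ) (hd : 0 ≤ d)
    (hint : IntegrableOn (fun y ↦ φ y / y ^ (k + 1)) (Ioi d)) :
    ∫ x in Iio 0, ∫ y in Ioi d, φ y / (y - x) ^ (k + 2) =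
      (∫ y in Ioi d, φ y / y ^ (k + 1)) / (k + 1) := by
  rw [integral_integral_swap (integrable_prod_div_sub_pow k hφ hd hint), ← integral_div]
  exact setIntegral_congr_fun measurableSet_Ioi fun y (hy : d < y) ↦
    integral_Iio_div_sub_pow k (φ y) (hd.trans_lt hy)

end Fubini

theorem log_cross_ratio_eq_add {x y d : ℝ} (hx : x < 0) (hd : 0 < d) (hy : d < y) :
    log (y * (x - d) / (x * (y - d))) = log (y / (y - d)) + log ((d - x) / (d - x - d)) := by
  have hyd : 0 < y - d := sub_pos.mpr hy
  rw [sub_sub_cancel_left, ← log_mul (div_pos (hd.trans hy) hyd).ne'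
    (div_pos (by linarith) (neg_pos.mpr hx)).ne']
  congr 1
  field_simp [hx.ne, hyd.ne']
  ring

theorem integral_Ioi_log_cross_ratio_div_sub_pow (k : ℕ) {x d : ℝ} (hx : x < 0) (hd : 0 < d)
    (hint : IntegrableOn (fun y ↦ log (y / (y - d)) / (y - x) ^ (k + 2)) (Ioi d)) :
    ∫ y in Ioi d, log (y * (x - d) / (x * (y - d))) / (y - x) ^ (k + 2) =
      (∫ y in Ioi d, log (y / (y - d)) / (y - x) ^ (k + 2)) +
        log ((d - x) / (d - x - d)) / (d - x) ^ (k + 1) / (k + 1) := by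
  have hxd : x < d := hx.trans hd
  rw [← integral_Ioi_div_sub_pow k _ hxd, ← integral_add hint]
  · exact setIntegral_congr_fun measurableSet_Ioi fun y hy ↦ by
      rw [log_cross_ratio_eq_add hx hd hy, add_div]
  · simpa only [div_eq_mul_inv] using (integral_Ioi_inv_sub_pow k hxd).1.const_mul _

/-- For every integer `n ≥ 3` and real `d > 0`,
`∫_{x=-∞}^{0} ∫_{y=d}^{∞} log(y(x−d)/(x(y−d))) / (y−x)^n dy dx
  = 2·H(n−2) / ((n−1)(n−2)·d^{n−2})`. -/
theorem iterated_integral_log_cross_ratio (n : ℕ) (hn : 3 ≤ n) (d : ℝ) (hd : 0 < d) :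
    (∫ x in Set.Iio (0 : ℝ), ∫ y in Set.Ioi d,
        Real.log (y * (x - d) / (x * (y - d))) / (y - x) ^ n) =
      2 * H (n - 2) / (((n : ℝ) - 1) * ((n : ℝ) - 2) * d ^ (n - 2)) := by
  obtain ⟨m, rfl⟩ : ∃ m, n = m + 2 := ⟨n - 2, by omega⟩
  have hm : m ≠ 0 := by omega
  set g : ℝ → ℝ := fun t ↦ log (t / (t - d))
  have hg : Measurable g := by fun_prop
  obtain ⟨hJint, hJ⟩ := integral_Ioi_log_div_sub_div_pow hm hd
  have hF := integrable_prod_div_sub_pow m hg hd.le hJint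
  set G : ℝ → ℝ := fun t ↦ g t / t ^ (m + 1) / (m + 1)
  have hGint : IntegrableOn (fun x ↦ G (d - x)) (Iio 0) :=
    (integrableOn_Iio_comp_sub_left_iff G 0 d).mpr (by rw [sub_zero]; exact hJint.div_const _)
  have hinner : ∀ᵐ x ∂(volume.restrict (Iio 0)),
      ∫ y in Ioi d, log (y * (x - d) / (x * (y - d))) / (y - x) ^ (m + 2) =
        (∫ y in Ioi d, g y / (y - x) ^ (m + 2)) + G (d - x) := by
    filter_upwards [hF.prod_right_ae, ae_restrict_mem measurableSet_Iio] with x hx (hx0 : x < 0)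
    exact integral_Ioi_log_cross_ratio_div_sub_pow m hx0 hd hx
  rw [integral_congr_ae hinner, integral_add hF.integral_prod_left hGint,
    integral_Iio_integral_Ioi_div_sub_pow m hg hd.le hJint, integral_Iio_comp_sub_left G,
    sub_zero, integral_div, hJ, Nat.add_sub_cancel, Nat.cast_add, Nat.cast_ofNat,
    add_sub_cancel_right, show (m : ℝ) + 2 - 1 = m + 1 by ring]
  field_simp
  ring
end

section
/- For every integer n ≥ 3 and every real d > 0, the iterated integral ∫_{x=-∞}^{0} ∫_{y=d}^{∞} log(d−x) / (y−x)^n dy dx equals ((n−2)·log(d) + 1) / ((n−1)(n−2)²·d^{n−2}). -/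
/-!
The inner integral is elementary: `∫_d^∞ (y - x)^(-n) dy = (d - x)^(1-n) / (n - 1)`.
The substitution `t = d - x` turns the outer integral into `(n - 1)⁻¹ ∫_d^∞ log t · t^(1-n) dt`,
and `t^(r+1) (log t / (r+1) - 1 / (r+1)^2)` is an antiderivative of `log t · t^r` that vanishes
at infinity when `r < -1`.
-/

open Real MeasureTheory Set Filter Topology Asymptotics

section Substitution

variable {E : Type*} [NormedAddCommGroup E] [NormedSpace ℝ E]

theorem setIntegral_Ioi_comp_sub_right (f : ℝ → E) (a c : ℝ) :
    ∫ y in Ioi c, f (y - a) = ∫ t in Ioi (c - a), f t := by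
  rw [← (measurePreserving_sub_right volume a).setIntegral_preimage_emb
    (MeasurableEquiv.subRight a).measurableEmbedding f]
  simp

theorem setIntegral_Iio_comp_sub_left (f : ℝ → E) (a c : ℝ) :
    ∫ x in Iio c, f (a - x) = ∫ t in Ioi (a - c), f t := by
  rw [← (Measure.measurePreserving_sub_left volume a).setIntegral_preimage_emb
    (MeasurableEquiv.subLeft a).measurableEmbedding f]
  simp

end Substitution

theorem integral_Ioi_sub_rpow {s : ℝ} (hs : s < -1) {a c : ℝ} (hac : a < c) :
    ∫ y in Ioi c, (y - a) ^ s = -(c - a) ^ (s + 1) / (s + 1) := by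
  rw [setIntegral_Ioi_comp_sub_right (· ^ s), integral_Ioi_rpow_of_lt hs (sub_pos.2 hac)]

theorem integral_Ioi_div_sub_pow_s3 (K : ℝ) {n : ℕ} (hn : 2 ≤ n) {a c : ℝ} (hac : a < c) :
    ∫ y in Ioi c, K / (y - a) ^ n = K * (c - a) ^ (1 - (n : ℝ)) / (n - 1) := by
  have hn' : (2 : ℝ) ≤ n := by exact_mod_cast hn
  calc ∫ y in Ioi c, K / (y - a) ^ n
      = K * ∫ y in Ioi c, (y - a) ^ (-(n : ℝ)) := by
        rw [← integral_const_mul]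
        refine setIntegral_congr_fun measurableSet_Ioi fun y hy => ?_
        have hya : 0 < y - a := by linarith [mem_Ioi.1 hy]
        rw [rpow_neg hya.le, rpow_natCast, div_eq_mul_inv]
    _ = K * (c - a) ^ (1 - (n : ℝ)) / (n - 1) := by
        rw [integral_Ioi_sub_rpow (by linarith) hac, neg_add_eq_sub, mul_div_assoc, neg_div,
          ← div_neg, neg_sub]

theorem integrableOn_Ioi_log_mul_rpow {r : ℝ} (hr : r < -1) {c : ℝ} (hc : 0 < c) :
    IntegrableOn (fun t => log t * t ^ r) (Ioi c) := by
  have hcont : ContinuousOn (fun t => log t * t ^ r) (Ici c) := fun t ht =>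
    ((continuousAt_log (hc.trans_le ht).ne').mul
      (continuousAt_rpow_const t r (Or.inl (hc.trans_le ht).ne'))).continuousWithinAt
  -- `log t = o(t ^ ε)` with `ε = (-1 - r) / 2` leaves the integrable power `t ^ ((r - 1) / 2)`
  have hbigO : (fun t => log t * t ^ r) =O[atTop] (· ^ ((r - 1) / 2)) := by
    refine ((isLittleO_log_rpow_atTop (r := (-1 - r) / 2) (by linarith)).isBigO.mul
      (isBigO_refl (· ^ r) atTop)).congr' EventuallyEq.rfl ?_
    filter_upwards [eventually_gt_atTop 0] with t ht
    rw [← rpow_add ht]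
    ring_nf
  exact (LocallyIntegrableOn.integrableOn_of_isBigO_atTop
    (hcont.locallyIntegrableOn measurableSet_Ici) hbigO
    ⟨Ioi 1, Ioi_mem_atTop 1, integrableOn_Ioi_rpow_of_lt (by linarith) one_pos⟩).mono_set
      Ioi_subset_Ici_self

theorem integral_Ioi_log_mul_rpow {r : ℝ} (hr : r < -1) {c : ℝ} (hc : 0 < c) :
    ∫ t in Ioi c, log t * t ^ r = c ^ (r + 1) * (1 - (r + 1) * log c) / (r + 1) ^ 2 := by
  have hr1 : r + 1 ≠ 0 := by linarith
  have hderiv : ∀ t ∈ Ici c,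
      HasDerivAt (fun t => t ^ (r + 1) * (log t / (r + 1) - 1 / (r + 1) ^ 2))
        (log t * t ^ r) t := by
    intro t ht
    have ht0 : 0 < t := hc.trans_le ht
    refine ((hasDerivAt_rpow_const (p := r + 1) (Or.inl ht0.ne')).mul
      (((hasDerivAt_log ht0.ne').div_const (r + 1)).sub_const (1 / (r + 1) ^ 2))).congr_deriv ?_
    rw [add_sub_cancel_right, rpow_add_one ht0.ne']
    field_simp
    ring
  have hlim : Tendsto (fun t => t ^ (r + 1) * (log t / (r + 1) - 1 / (r + 1) ^ 2))
      atTop (𝓝 0) := by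
    have hlog : Tendsto (fun t => log t * t ^ (r + 1)) atTop (𝓝 0) := by
      refine (isLittleO_log_rpow_atTop (r := -(r + 1)) (by linarith)).tendsto_div_nhds_zero.congr'
        ?_
      filter_upwards [eventually_gt_atTop 0] with t ht
      rw [rpow_neg ht.le, div_inv_eq_mul]
    have hpow : Tendsto (fun t : ℝ => t ^ (r + 1)) atTop (𝓝 0) := by
      simpa using tendsto_rpow_neg_atTop (y := -(r + 1)) (by linarith)
    simpa using ((hlog.div_const (r + 1)).sub (hpow.div_const ((r + 1) ^ 2))).congr
      fun t => by ring
  rw [integral_Ioi_of_hasDerivAt_of_tendsto' hderiv (integrableOn_Ioi_log_mul_rpow hr hc) hlim]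
  field_simp
  ring

/-- For every integer `n ≥ 3` and real `d > 0`,
`∫_{x=-∞}^{0} ∫_{y=d}^{∞} log(d−x) / (y−x)^n dy dx
  = ((n−2)·log d + 1) / ((n−1)(n−2)²·d^{n−2})`. -/
theorem iterated_integral_log_d_sub_x (n : ℕ) (hn : 3 ≤ n) (d : ℝ) (hd : 0 < d) :
    (∫ x in Set.Iio (0 : ℝ), ∫ y in Set.Ioi d, Real.log (d - x) / (y - x) ^ n) =
      (((n : ℝ) - 2) * Real.log d + 1) /
        (((n : ℝ) - 1) * ((n : ℝ) - 2) ^ 2 * d ^ (n - 2)) := by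
  have hn' : (3 : ℝ) ≤ n := by exact_mod_cast hn
  have hpow : d ^ (1 - (n : ℝ) + 1) = (d ^ (n - 2))⁻¹ := by
    rw [← rpow_natCast, ← rpow_neg hd.le, Nat.cast_sub (by omega)]
    push_cast
    ring_nf
  rw [setIntegral_congr_fun measurableSet_Iio fun x hx =>
      integral_Ioi_div_sub_pow_s3 (log (d - x)) (by omega) (by linarith [mem_Iio.1 hx]),
    setIntegral_Iio_comp_sub_left (fun t => log t * t ^ (1 - (n : ℝ)) / (n - 1)), sub_zero,
    integral_div, integral_Ioi_log_mul_rpow (by linarith) hd, hpow]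
  have : (n : ℝ) - 1 ≠ 0 := by linarith
  have : (n : ℝ) - 2 ≠ 0 := by linarith
  have : 1 - (n : ℝ) + 1 ≠ 0 := by linarith
  field_simp
  ring
end

section
/- For every integer n ≥ 3 and every real d > 0, the iterated integral ∫_{x=-∞}^{0} ∫_{y=d}^{∞} log(−x/y) / (y−x)^n dy dx equals −H(n−2) / ((n−1)(n−2)·d^{n−2}). -/
open Real MeasureTheory

/-!
After the reflection `x = -u` the integrand is absolutely integrable on `(0, ∞) × (d, ∞)` for
`n ≥ 3`, so the order of integration can be swapped. For fixed `y` the substitution `u = y r`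
turns the inner integral into `y ^ (1 - n) * ∫₀^∞ log r / (1 + r) ^ n dr`, and
`∫_d^∞ y ^ (1 - n) dy = d ^ (2 - n) / (n - 2)`.

The remaining integral is `-H (n - 2) / (n - 1)`. A primitive comes from integrating by parts
against `(1 - (1 + r) ^ (1 - n)) / (n - 1)`, chosen to vanish at `0`; the resulting term
`(1 - (1 + r) ^ (1 - n)) / r = ∑_{j=1}^{n-1} (1 + r) ^ (-j)` integrates to
`-log (1 + r) + ∑_{k=1}^{n-2} (1 + r) ^ (-k) / k`, whose value at `0` is `H (n - 2)`.
-/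

open Set Filter Topology Finset

lemma one_sub_inv_one_add_pow_eq_mul_sum {K : Type*} [Field K] {r : K} (hr : 1 + r ≠ 0)
    (m : ℕ) :
    1 - (1 + r)⁻¹ ^ m = r * ∑ j ∈ range m, (1 + r)⁻¹ ^ (j + 1) := by
  have hrq : r * (1 + r)⁻¹ = 1 - (1 + r)⁻¹ := by field_simp; ring
  simp_rw [pow_succ, ← sum_mul, mul_comm _ (1 + r)⁻¹, ← mul_assoc, hrq, mul_neg_geom_sum]

noncomputable def primitiveLogDivOneAddPow (n : ℕ) (r : ℝ) : ℝ :=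
  ((1 - (1 + r)⁻¹ ^ (n - 1)) * log r - log (1 + r)
    + ∑ k ∈ range (n - 2), (1 + r)⁻¹ ^ (k + 1) / (k + 1)) / (n - 1)

lemma hasDerivAt_primitiveLogDivOneAddPow {n : ℕ} (hn : 2 ≤ n) {r : ℝ} (hr : 0 < r) :
    HasDerivAt (primitiveLogDivOneAddPow n) (log r / (1 + r) ^ n) r := by
  obtain ⟨m, rfl⟩ : ∃ m, n = m + 2 := ⟨n - 2, by omega⟩
  have h1r : 1 + r ≠ 0 := by positivity
  have hq : HasDerivAt (fun s => (1 + s)⁻¹) (-(1 + r)⁻¹ ^ 2) r := by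
    refine (((hasDerivAt_id' r).const_add 1).fun_inv h1r).congr_deriv ?_
    rw [inv_pow, neg_div, one_div]
  have hsum :
      HasDerivAt (fun s : ℝ => ∑ k ∈ range (m + 2 - 2), (1 + s)⁻¹ ^ (k + 1) / (k + 1))
      (-∑ k ∈ range m, (1 + r)⁻¹ ^ (k + 2)) r := by
    rw [← sum_neg_distrib, Nat.add_sub_cancel]
    refine HasDerivAt.fun_sum fun k _ => ?_
    refine ((hq.fun_pow (k + 1)).div_const ((k : ℝ) + 1)).congr_deriv ?_
    push_cast
    simp only [inv_pow]
    field_simp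
    ring
  have hlog : HasDerivAt (fun s => log (1 + s)) (1 + r)⁻¹ r := by
    simpa using ((hasDerivAt_id r).const_add 1).log h1r
  have hgeom :
      (1 - (1 + r)⁻¹ ^ (m + 1)) * r⁻¹ = (1 + r)⁻¹ + ∑ k ∈ range m, (1 + r)⁻¹ ^ (k + 2) := by
    rw [one_sub_inv_one_add_pow_eq_mul_sum h1r, sum_range_succ', mul_comm,
      inv_mul_cancel_left₀ hr.ne', zero_add, pow_one, add_comm]
  have hmain := ((((hasDerivAt_const r (1 : ℝ)).fun_sub (hq.fun_pow (m + 2 - 1))).fun_mul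
    (hasDerivAt_log hr.ne')).fun_sub hlog).fun_add hsum |>.div_const (((m + 2 : ℕ) : ℝ) - 1)
  refine hmain.congr_deriv ?_
  rw [show m + 2 - 1 = m + 1 from rfl, Nat.add_sub_cancel, hgeom,
    show ((m + 2 : ℕ) : ℝ) - 1 = m + 1 by push_cast; ring]
  push_cast
  simp only [inv_pow]
  field_simp
  ring

lemma continuousAt_primitiveLogDivOneAddPow_zero (n : ℕ) :
    ContinuousAt (primitiveLogDivOneAddPow n) 0 := by
  have hcont : ContinuousAt (fun r : ℝ =>
      ((r * log r) * ∑ j ∈ range (n - 1), (1 + r)⁻¹ ^ (j + 1) - log (1 + r)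
        + ∑ k ∈ range (n - 2), (1 + r)⁻¹ ^ (k + 1) / (k + 1)) / (n - 1)) 0 := by
    have hmul_log := continuous_mul_log.continuousAt (x := 0)
    fun_prop (disch := norm_num)
  refine hcont.congr ?_
  filter_upwards [eventually_gt_nhds (show (-1 : ℝ) < 0 by norm_num)] with r hr
  rw [primitiveLogDivOneAddPow, one_sub_inv_one_add_pow_eq_mul_sum (by linarith)]
  ring

lemma primitiveLogDivOneAddPow_zero (n : ℕ) :
    primitiveLogDivOneAddPow n 0 = H (n - 2) / (n - 1) := by
  simp [primitiveLogDivOneAddPow, H]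

lemma tendsto_primitiveLogDivOneAddPow_atTop {n : ℕ} (hn : 2 ≤ n) :
    Tendsto (primitiveLogDivOneAddPow n) atTop (𝓝 0) := by
  obtain ⟨m, rfl⟩ : ∃ m, n = m + 2 := ⟨n - 2, by omega⟩
  have hq : Tendsto (fun r : ℝ => (1 + r)⁻¹) atTop (𝓝 0) :=
    tendsto_inv_atTop_zero.comp (tendsto_atTop_add_const_left _ 1 tendsto_id)
  have hlog := (tendsto_log_comp_add_sub_log 1).neg.sub
    ((hq.pow m).mul (tendsto_pow_log_div_mul_add_atTop 1 1 1 one_ne_zero))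
  have hsum := tendsto_finsetSum (range m) fun k _ => (hq.pow (k + 1)).div_const ((k : ℝ) + 1)
  have hlim := (hlog.add hsum).div_const ((m : ℝ) + 1)
  simp only [neg_zero, mul_zero, sub_zero, ne_eq, Nat.add_one_ne_zero, not_false_eq_true,
    zero_pow, zero_div, sum_const_zero, add_zero] at hlim
  refine hlim.congr' ?_
  filter_upwards [eventually_gt_atTop 0] with r hr
  simp only [primitiveLogDivOneAddPow, Nat.add_sub_cancel, show m + 2 - 1 = m + 1 from rfl]
  push_cast
  rw [pow_one, one_mul, add_comm r 1, div_eq_mul_inv (log r)]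
  ring

lemma integrableOn_log_div_one_add_pow {n : ℕ} (hn : 2 ≤ n) :
    IntegrableOn (fun r => log r / (1 + r) ^ n) (Ioi 0) := by
  rw [← Ioc_union_Ioi_eq_Ioi zero_le_one]
  refine IntegrableOn.union ?_ ?_
  · refine Integrable.mono (intervalIntegral.intervalIntegrable_log' (a := 0) (b := 1)).1
      (Measurable.aestronglyMeasurable (by fun_prop)) ?_
    filter_upwards [ae_restrict_mem measurableSet_Ioc] with r hr
    rw [norm_div, norm_pow, Real.norm_of_nonneg (by linarith [hr.1] : 0 ≤ 1 + r)]
    exact div_le_self (norm_nonneg _) (one_le_pow₀ (by linarith [hr.1]))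
  · exact integrableOn_Ioi_deriv_of_nonneg'
      (fun r hr => hasDerivAt_primitiveLogDivOneAddPow hn (zero_lt_one.trans_le hr))
      (fun r hr => div_nonneg (log_nonneg (le_of_lt hr))
        (pow_nonneg (by linarith [mem_Ioi.mp hr]) n))
      (tendsto_primitiveLogDivOneAddPow_atTop hn)

theorem integral_log_div_one_add_pow {n : ℕ} (hn : 2 ≤ n) :
    ∫ r in Ioi 0, log r / (1 + r) ^ n = -H (n - 2) / (n - 1) := by
  rw [integral_Ioi_of_hasDerivAt_of_tendsto
    (continuousAt_primitiveLogDivOneAddPow_zero n).continuousWithinAt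
    (fun r hr => hasDerivAt_primitiveLogDivOneAddPow hn hr) (integrableOn_log_div_one_add_pow hn)
    (tendsto_primitiveLogDivOneAddPow_atTop hn), primitiveLogDivOneAddPow_zero, zero_sub, neg_div]

lemma comp_mul_div_div_add_mul_pow (g : ℝ → ℝ) (n : ℕ) {c : ℝ} (hc : 0 < c) (r : ℝ) :
    g (c * r / c) / (c + c * r) ^ n = (c ^ n)⁻¹ * (g r / (1 + r) ^ n) := by
  rw [mul_div_cancel_left₀ _ hc.ne', show c + c * r = c * (1 + r) by ring, mul_pow,
    div_mul_eq_div_div, div_eq_inv_mul _ (c ^ n), mul_div_assoc]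

lemma integrableOn_comp_div_div_add_pow_iff (g : ℝ → ℝ) (n : ℕ) {c : ℝ} (hc : 0 < c) :
    IntegrableOn (fun u => g (u / c) / (c + u) ^ n) (Ioi 0) ↔
      IntegrableOn (fun r => g r / (1 + r) ^ n) (Ioi 0) := by
  have h := integrableOn_Ioi_comp_mul_left_iff (fun u => g (u / c) / (c + u) ^ n) 0 hc
  rw [mul_zero] at h
  rw [← h]
  simp_rw [comp_mul_div_div_add_mul_pow g n hc]
  exact integrable_const_mul_iff (by positivity : (c ^ n)⁻¹ ≠ 0).isUnit _

lemma integral_comp_div_div_add_pow (g : ℝ → ℝ) (n : ℕ) {c : ℝ} (hc : 0 < c) :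
    ∫ u in Ioi 0, g (u / c) / (c + u) ^ n = c / c ^ n * ∫ r in Ioi 0, g r / (1 + r) ^ n := by
  have h := integral_comp_mul_left_Ioi (fun u => g (u / c) / (c + u) ^ n) 0 hc
  simp_rw [mul_zero, comp_mul_div_div_add_mul_pow g n hc, integral_const_mul, smul_eq_mul] at h
  rw [eq_inv_mul_iff_mul_eq₀ hc.ne'] at h
  rw [← h]
  ring

lemma integrableOn_Ioi_inv_pow {m : ℕ} (hm : 2 ≤ m) {d : ℝ} (hd : 0 < d) :
    IntegrableOn (fun y : ℝ => (y ^ m)⁻¹) (Ioi d) := by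
  refine (integrableOn_Ioi_rpow_of_lt (a := -(m : ℝ)) (by norm_cast; omega) hd).congr_fun
    (fun y hy => ?_) measurableSet_Ioi
  dsimp only
  rw [rpow_neg (hd.trans hy).le, rpow_natCast]

lemma integral_Ioi_inv_pow_s4 {m : ℕ} (hm : 2 ≤ m) {d : ℝ} (hd : 0 < d) :
    ∫ y in Ioi d, (y ^ m)⁻¹ = ((m - 1) * d ^ (m - 1))⁻¹ := by
  have hm' : (2 : ℝ) ≤ m := by exact_mod_cast hm
  rw [setIntegral_congr_fun measurableSet_Ioi fun y (hy : d < y) =>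
      (rpow_natCast y m ▸ rpow_neg (hd.trans hy).le (m : ℝ)).symm,
    integral_Ioi_rpow_of_lt (by linarith) hd,
    show -(m : ℝ) + 1 = -((m - 1 : ℕ) : ℝ) by push_cast [Nat.cast_sub (by omega : 1 ≤ m)]; ring,
    rpow_neg hd.le, rpow_natCast, Nat.cast_sub (by omega : 1 ≤ m)]
  field_simp
  ring

lemma integral_log_div_div_add_pow {n : ℕ} (hn : 2 ≤ n) {y : ℝ} (hy : 0 < y) :
    ∫ u in Ioi 0, log (u / y) / (y + u) ^ n = -H (n - 2) / (n - 1) * (y ^ (n - 1))⁻¹ := by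
  rw [integral_comp_div_div_add_pow log n hy, integral_log_div_one_add_pow hn,
    ← pow_sub_one_mul (by omega : n ≠ 0), div_mul_cancel_right₀ hy.ne', mul_comm]

lemma integrable_uncurry_log_div_div_add_pow {n : ℕ} (hn : 3 ≤ n) {d : ℝ} (hd : 0 < d) :
    Integrable (Function.uncurry fun u y : ℝ => log (u / y) / (y + u) ^ n)
      ((volume.restrict (Ioi 0)).prod (volume.restrict (Ioi d))) := by
  rw [integrable_prod_iff' (Measurable.aestronglyMeasurable (by fun_prop))]
  refine ⟨?_, ?_⟩
  · filter_upwards [ae_restrict_mem measurableSet_Ioi] with y hy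
    exact (integrableOn_comp_div_div_add_pow_iff log n (hd.trans hy)).2
      (integrableOn_log_div_one_add_pow (by omega))
  · refine IntegrableOn.congr_fun
      ((integrableOn_Ioi_inv_pow (m := n - 1) (by omega) hd).const_mul
        (∫ r in Ioi 0, |log r| / (1 + r) ^ n)) (fun y (hy : d < y) => ?_) measurableSet_Ioi
    have hy0 : 0 < y := hd.trans hy
    have hnorm : ∫ u in Ioi 0, ‖log (u / y) / (y + u) ^ n‖
        = ∫ u in Ioi 0, |log (u / y)| / (y + u) ^ n :=
      setIntegral_congr_fun measurableSet_Ioi fun u (hu : 0 < u) => by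
        rw [norm_div, norm_pow, Real.norm_eq_abs, Real.norm_of_nonneg (by positivity)]
    simp only [Function.uncurry_apply_pair]
    rw [hnorm, integral_comp_div_div_add_pow (fun t => |log t|) n hy0,
      ← pow_sub_one_mul (by omega : n ≠ 0), div_mul_cancel_right₀ hy0.ne', mul_comm]

/-- For every integer `n ≥ 3` and real `d > 0`,
`∫_{x=-∞}^{0} ∫_{y=d}^{∞} log(−x/y) / (y−x)^n dy dx = −H(n−2) / ((n−1)(n−2)·d^{n−2})`. -/
theorem iterated_integral_log_neg_x_div_y (n : ℕ) (hn : 3 ≤ n) (d : ℝ) (hd : 0 < d) :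
    (∫ x in Set.Iio (0 : ℝ), ∫ y in Set.Ioi d, Real.log (-x / y) / (y - x) ^ n) =
      -H (n - 2) / (((n : ℝ) - 1) * ((n : ℝ) - 2) * d ^ (n - 2)) := by
  calc (∫ x in Iio (0 : ℝ), ∫ y in Ioi d, log (-x / y) / (y - x) ^ n)
      = ∫ u in Ioi 0, ∫ y in Ioi d, log (u / y) / (y + u) ^ n := by
        rw [setIntegral_congr_set Iio_ae_eq_Iic, ← neg_zero, ← integral_comp_neg_Ioi, neg_zero]
        simp only [neg_neg, sub_neg_eq_add]
    _ = ∫ y in Ioi d, ∫ u in Ioi 0, log (u / y) / (y + u) ^ n :=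
        integral_integral_swap (integrable_uncurry_log_div_div_add_pow hn hd)
    _ = ∫ y in Ioi d, -H (n - 2) / (n - 1) * (y ^ (n - 1))⁻¹ :=
        setIntegral_congr_fun measurableSet_Ioi fun y (hy : d < y) =>
          integral_log_div_div_add_pow (by omega) (hd.trans hy)
    _ = -H (n - 2) / (((n : ℝ) - 1) * ((n : ℝ) - 2) * d ^ (n - 2)) := by
        rw [integral_const_mul, integral_Ioi_inv_pow_s4 (by omega) hd,
          Nat.cast_sub (by omega : 1 ≤ n), show n - 1 - 1 = n - 2 by omega,
          ← div_eq_mul_inv, div_div]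
        push_cast
        ring
end

section
/- For every integer n ≥ 3, the integral ∫_{1}^{∞} log(u−1) / u^{n−1} du equals −H(n−3) / (n−2). -/
/-!
Integrating by parts with `(1 - u^(-(q+1))) / (q + 1)` as the antiderivative of `u^(-(q+2))`
reduces `∫ log (u - 1) u^(-(q+2)) du` to the integral of the geometric sum
`(1 - u^(-(q+1))) / (u - 1) = u^(-1) + ⋯ + u^(-(q+1))`,
which is `log u - ∑_{j=1}^{q} u^(-j) / j`.
The constant `1` makes the resulting antiderivative continuous at `u = 1`, where it equals
`H q / (q + 1)`, and makes it tend to `0` at infinity since `log (u - 1) - log u → 0`.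
-/

open Real MeasureTheory

open Filter Finset Set Topology

lemma one_sub_inv_pow_eq_sub_one_mul_sum {K : Type*} [Field K] {x : K} (hx : x ≠ 0) (n : ℕ) :
    1 - (x ^ n)⁻¹ = (x - 1) * ∑ j ∈ range n, (x ^ (j + 1))⁻¹ := by
  have htelescope := sum_range_sub' (fun j => (x ^ j)⁻¹) n
  rw [pow_zero, inv_one] at htelescope
  rw [← htelescope, mul_sum]
  refine sum_congr rfl fun j _ => ?_
  field_simp
  ring

lemma tendsto_log_sub_one_mul_inv_pow_atTop {k : ℕ} (hk : k ≠ 0) :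
    Tendsto (fun u : ℝ => log (u - 1) * (u ^ k)⁻¹) atTop (𝓝 0) := by
  refine tendsto_of_tendsto_of_tendsto_of_le_of_le' tendsto_const_nhds
    isLittleO_log_id_atTop.tendsto_div_nhds_zero ?_ ?_
  all_goals filter_upwards [eventually_ge_atTop (2 : ℝ)] with u hu
  · have := log_nonneg (show (1 : ℝ) ≤ u - 1 by linarith)
    positivity
  · have hlog : log (u - 1) ≤ log u := log_le_log (by linarith) (by linarith)
    have hpow : (u ^ k)⁻¹ ≤ u⁻¹ :=
      inv_anti₀ (by positivity) (le_self_pow₀ (by linarith) hk)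
    exact mul_le_mul hlog hpow (by positivity) (log_nonneg (by linarith))

section Antiderivative

variable (q : ℕ)

noncomputable def antiderivLogSubOneDivPow (u : ℝ) : ℝ :=
  (log (u - 1) * (1 - (u ^ (q + 1))⁻¹) - log u
    + ∑ j ∈ range q, (u ^ (j + 1))⁻¹ / (j + 1)) / (q + 1)

lemma antiderivLogSubOneDivPow_one :
    antiderivLogSubOneDivPow q 1 = H q / (q + 1) := by
  simp [antiderivLogSubOneDivPow, H]

lemma hasDerivAt_antiderivLogSubOneDivPow {u : ℝ} (hu : 1 < u) :
    HasDerivAt (antiderivLogSubOneDivPow q) (log (u - 1) / u ^ (q + 2)) u := by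
  have hu0 : u ≠ 0 := by positivity
  have hu1 : u - 1 ≠ 0 := by linarith
  have hlog : HasDerivAt (fun u : ℝ => log (u - 1)) (u - 1)⁻¹ u := by
    simpa using ((hasDerivAt_id u).sub_const 1).log hu1
  have hinv : ∀ k : ℕ, HasDerivAt (fun u : ℝ => (u ^ (k + 1))⁻¹) (-(k + 1) / u ^ (k + 2)) u := by
    intro k
    refine ((hasDerivAt_pow (k + 1) u).inv (pow_ne_zero _ hu0)).congr_deriv ?_
    push_cast
    field_simp
    ring
  refine ((((hlog.mul ((hinv q).const_sub 1)).sub (hasDerivAt_log hu0)).add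
    (HasDerivAt.fun_sum (u := range q) fun j _ => (hinv j).div_const ((j : ℝ) + 1))).div_const
      ((q : ℝ) + 1)).congr_deriv ?_
  have hterm : ∀ j ∈ range q, -((j : ℝ) + 1) / u ^ (j + 2) / (j + 1) = -(u ^ (j + 1 + 1))⁻¹ :=
    fun j _ => by field_simp
  rw [one_sub_inv_pow_eq_sub_one_mul_sum hu0, inv_mul_cancel_left₀ hu1, sum_range_succ',
    sum_congr rfl hterm, sum_neg_distrib]
  field_simp
  ring

/-- At `u = 1` the definition relies on `log 0 = 0`; continuity shows this is the right value. -/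
lemma continuousOn_antiderivLogSubOneDivPow :
    ContinuousOn (antiderivLogSubOneDivPow q) (Ici 1) := by
  have hpos : ∀ u ∈ Ici (1 : ℝ), u ≠ 0 := fun u hu => by
    have : (1 : ℝ) ≤ u := hu
    positivity
  have hmul_log : Continuous fun u : ℝ => (u - 1) * log (u - 1) :=
    continuous_mul_log.comp (continuous_sub_right 1)
  have hcont : ContinuousOn (fun u : ℝ => ((u - 1) * log (u - 1) *
      ∑ j ∈ range (q + 1), (u ^ (j + 1))⁻¹ - log u
        + ∑ j ∈ range q, (u ^ (j + 1))⁻¹ / (j + 1)) / (q + 1)) (Ici 1) := by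
    have hinv : ∀ k : ℕ, ContinuousOn (fun u : ℝ => (u ^ k)⁻¹) (Ici 1) := fun k =>
      (continuousOn_pow k).inv₀ fun u hu => pow_ne_zero k (hpos u hu)
    refine ((((hmul_log.continuousOn.mul (continuousOn_finsetSum _ fun j _ => hinv _)).sub
      (continuousOn_log.mono fun u hu => hpos u hu)).add
      (continuousOn_finsetSum _ fun j _ => (hinv _).div_const _)).div_const _)
  refine hcont.congr fun u hu => ?_
  simp only [antiderivLogSubOneDivPow, one_sub_inv_pow_eq_sub_one_mul_sum (hpos u hu)]
  ring

lemma tendsto_antiderivLogSubOneDivPow_atTop :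
    Tendsto (antiderivLogSubOneDivPow q) atTop (𝓝 0) := by
  have hdiff : Tendsto (fun u : ℝ => log (u - 1) - log u) atTop (𝓝 0) := by
    simpa [sub_eq_add_neg] using tendsto_log_comp_add_sub_log (-1)
  have hsum : Tendsto (fun u : ℝ => ∑ j ∈ range q, (u ^ (j + 1))⁻¹ / ((j : ℝ) + 1))
      atTop (𝓝 0) := by
    simpa using tendsto_finsetSum (range q) fun j _ =>
      ((tendsto_pow_atTop j.add_one_ne_zero).inv_tendsto_atTop.div_const ((j : ℝ) + 1))
  have hlim := ((hdiff.sub (tendsto_log_sub_one_mul_inv_pow_atTop q.add_one_ne_zero)).add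
    hsum).div_const ((q : ℝ) + 1)
  rw [sub_zero, zero_add, zero_div] at hlim
  refine hlim.congr fun u => ?_
  simp only [antiderivLogSubOneDivPow]
  ring

lemma integrableOn_log_sub_one_div_pow :
    IntegrableOn (fun u : ℝ => log (u - 1) / u ^ (q + 2)) (Ioi 1) := by
  have hderiv : ∀ u ∈ Ioi (1 : ℝ), HasDerivAt (antiderivLogSubOneDivPow q)
      (log (u - 1) / u ^ (q + 2)) u := fun u hu => hasDerivAt_antiderivLogSubOneDivPow q hu
  -- The integrand changes sign at `2`; on each side it is the derivative of a monotone function.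
  have hnonpos : ∀ u ∈ Ioo (1 : ℝ) 2, 0 ≤ -(log (u - 1) / u ^ (q + 2)) := fun u hu =>
    neg_nonneg.2 <| div_nonpos_of_nonpos_of_nonneg
      (log_nonpos (by linarith [hu.1]) (by linarith [hu.2])) (pow_pos (by linarith [hu.1]) _).le
  have hnonneg : ∀ u ∈ Ioi (2 : ℝ), 0 ≤ log (u - 1) / u ^ (q + 2) := fun u hu =>
    div_nonneg (log_nonneg (by linarith [mem_Ioi.1 hu])) (pow_pos (by linarith [mem_Ioi.1 hu]) _).le
  have hnear : IntegrableOn (fun u : ℝ => log (u - 1) / u ^ (q + 2)) (Ioc 1 2) := by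
    simpa using (intervalIntegral.integrableOn_deriv_of_nonneg
      ((continuousOn_antiderivLogSubOneDivPow q).mono Icc_subset_Ici_self).neg
      (fun u hu => (hderiv u hu.1).neg) hnonpos).neg
  have hfar : IntegrableOn (fun u : ℝ => log (u - 1) / u ^ (q + 2)) (Ioi 2) :=
    integrableOn_Ioi_deriv_of_nonneg' (fun u hu => hderiv u (one_lt_two.trans_le (mem_Ici.1 hu)))
      hnonneg (tendsto_antiderivLogSubOneDivPow_atTop q)
  rw [← Ioc_union_Ioi_eq_Ioi one_le_two]
  exact hnear.union hfar

theorem integral_log_sub_one_div_pow_add_two :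
    ∫ u in Ioi (1 : ℝ), log (u - 1) / u ^ (q + 2) = -H q / (q + 1) := by
  rw [integral_Ioi_of_hasDerivAt_of_tendsto
    ((continuousOn_antiderivLogSubOneDivPow q) 1 self_mem_Ici)
    (fun u hu => hasDerivAt_antiderivLogSubOneDivPow q hu)
    (integrableOn_log_sub_one_div_pow q) (tendsto_antiderivLogSubOneDivPow_atTop q),
    antiderivLogSubOneDivPow_one]
  ring

end Antiderivative

/-- For every integer `n ≥ 3`, `∫_{1}^{∞} log(u−1) / u^{n−1} du = −H(n−3) / (n−2)`. -/
theorem integral_log_sub_one_div_pow (n : ℕ) (hn : 3 ≤ n) :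
    (∫ u in Set.Ioi (1 : ℝ), Real.log (u - 1) / u ^ (n - 1)) =
      -H (n - 3) / ((n : ℝ) - 2) := by
  obtain ⟨q, rfl⟩ : ∃ q, n = q + 3 := ⟨n - 3, by omega⟩
  rw [show q + 3 - 1 = q + 2 by omega, show q + 3 - 3 = q by omega,
    integral_log_sub_one_div_pow_add_two q]
  push_cast
  ring
end
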